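/- Let q₁, q₂, q₃ be (not necessarily distinct) affine lines in ℝ², not all three parallel. Then exactly one of the following two statements holds: (1) q₁ ∩ q₂ ∩ q₃ ≠ ∅ and every two of the three lines form an angle of π/3 (the acute angle between the directions of any two of the lines equals π/3); (2) the set of triples (A, B, C) ∈ q₁ × q₂ × q₃ with dist(A,B) = dist(B,C) = dist(C,A) = 1 is finite. -/

import Mathlib

open scoped RealInnerProductSpace

/-- `l` is an (affine) line in the plane: a one-dimensional affine subspace. -/
def IsLine (l : AffineSubspace ℝ (EuclideanSpace ℝ (Fin 2))) : Prop :=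
  (l : Set (EuclideanSpace ℝ (Fin 2))).Nonempty ∧ Module.finrank ℝ l.direction = 1

/-- The acute angle formed by the two lines `l₁` and `l₂` equals `π/3`,
i.e. the cosine of the angle between any two nonzero direction vectors is `± 1/2`. -/
def AngleSixty (l₁ l₂ : AffineSubspace ℝ (EuclideanSpace ℝ (Fin 2))) : Prop :=
  ∀ u ∈ l₁.direction, ∀ v ∈ l₂.direction, u ≠ 0 → v ≠ 0 →
    |⟪u, v⟫| = ‖u‖ * ‖v‖ / 2

/-!
Fix a rotation `R` by `π/3`, so that `R² = R - 1`. A unit equilateral triangle `(a, b, c)` has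
`c - a = R (b - a)` or `b - a = R (c - a)`, so up to exchanging `q₂` and `q₃` it suffices to count
the triangles `(a, a + d, a + R d)` with `‖d‖ = 1` and vertices on `q₁, q₂, q₃`. Unless the lines
are all parallel, such a triangle is determined by `d`, and the admissible `d`, of any length,
form an affine subspace `W` of the plane. A proper affine subspace meets the unit circle in
finitely many points, since three points of a circle are never collinear; if `W` is the whole
plane, every unit `d` gives a triangle. Finally `W` is the whole plane exactly when `0 ∈ W`, i.e.
the lines are concurrent, and the directions of `q₂, q₃` are those of `q₁` turned by `R` and `R²`,
which is the `60°` condition.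
-/

open Module Metric Submodule

theorem exists_eq_span_singleton_of_finrank_eq_one {K W : Type*} [DivisionRing K] [AddCommGroup W]
    [Module K W] {S : Submodule K W} (h : finrank K S = 1) : ∃ v, v ≠ 0 ∧ S = K ∙ v := by
  obtain ⟨v, hv, hv0⟩ := exists_mem_ne_zero_of_ne_bot (p := S) (by rintro rfl; simp at h)
  exact ⟨v, hv0, eq_span_singleton_of_mem_of_finrank_eq_one h hv hv0⟩

theorem Metric.sphere_infinite {E : Type*} [NormedAddCommGroup E] [NormedSpace ℝ E]
    (hE : 1 < Module.rank ℝ E) (c : E) {r : ℝ} (hr : 0 < r) : (sphere c r).Infinite := by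
  have : Nontrivial E := rank_pos_iff_nontrivial.mp (zero_lt_one.trans hE)
  obtain ⟨v, hv⟩ := exists_norm_eq E hr.le
  refine (isPreconnected_sphere hE c r).infinite_of_nontrivial ⟨c + v, ?_, c - v, ?_, ?_⟩
  · simp [hv]
  · simp [hv]
  · intro h
    rw [sub_eq_add_neg, add_right_inj, eq_neg_iff_add_eq_zero, ← two_smul ℝ, smul_eq_zero] at h
    rcases h with h | rfl
    · norm_num at h
    · simp [hr.ne] at hv

section EuclideanPlane

variable {V : Type*} [NormedAddCommGroup V] [InnerProductSpace ℝ V]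

theorem AffineSubspace.eq_top_of_infinite_inter_sphere {P : Type*} [MetricSpace P]
    [NormedAddTorsor V P] (hV : finrank ℝ V = 2) {s : AffineSubspace ℝ P} {c : P} {r : ℝ}
    (h : ((s : Set P) ∩ sphere c r).Infinite) : s = ⊤ := by
  classical
  have : FiniteDimensional ℝ V := Module.finite_of_finrank_eq_succ hV
  obtain ⟨t, hts, ht⟩ := h.exists_subset_card_eq 3
  obtain ⟨p₁, p₂, p₃, h₁₂, h₁₃, h₂₃, rfl⟩ := Finset.card_eq_three.mp ht
  simp only [Finset.coe_insert, Finset.coe_singleton, Set.insert_subset_iff,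
    Set.singleton_subset_iff] at hts
  have hind : AffineIndependent ℝ ![p₁, p₂, p₃] := by
    refine EuclideanGeometry.Cospherical.affineIndependent_of_ne ⟨c, r, ?_⟩ h₁₂ h₁₃ h₂₃
    simp only [Set.mem_insert_iff, Set.mem_singleton_iff, forall_eq_or_imp, forall_eq]
    exact ⟨hts.1.2, hts.2.1.2, hts.2.2.2⟩
  rw [eq_top_iff, ← hind.affineSpan_eq_top_iff_card_eq_finrank_add_one.mpr (by simp [hV]),
    affineSpan_le, Matrix.range_cons, Matrix.range_cons, Matrix.range_cons, Matrix.range_empty]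
  simp [Set.insert_subset_iff, hts.1.1, hts.2.1.1, hts.2.2.1]

section Rotation

variable {R : V →ₗᵢ[ℝ] V}

theorem exists_rotation_sixty (hV : finrank ℝ V = 2) :
    ∃ R : V →ₗᵢ[ℝ] V, ∀ x, R (R x) = R x - x := by
  have : FiniteDimensional ℝ V := Module.finite_of_finrank_eq_succ hV
  let e : V ≃ₗᵢ[ℝ] ℂ := ((stdOrthonormalBasis ℝ V).reindex (finCongr hV)).repr.trans
    Complex.orthonormalBasisOneI.repr.symm
  let ζ := Circle.exp (Real.pi / 3)
  have hζ : (ζ : ℂ) * ζ = ζ - 1 := by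
    have h3 : Real.sqrt 3 ^ 2 = 3 := Real.sq_sqrt (by norm_num)
    simp only [ζ, Circle.coe_exp, Complex.exp_mul_I, ← Complex.ofReal_cos, ← Complex.ofReal_sin,
      Real.cos_pi_div_three, Real.sin_pi_div_three]
    apply Complex.ext <;> simp <;> nlinarith
  refine ⟨(e.trans ((rotation ζ).trans e.symm)).toLinearIsometry, fun x => e.injective ?_⟩
  simp [rotation_apply, ← mul_assoc, hζ, sub_mul]

theorem inner_self_rotation (hR : ∀ x, R (R x) = R x - x) (x : V) : ⟪x, R x⟫ = ‖x‖ ^ 2 / 2 := by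
  have h := norm_sub_sq_real (R x) x
  rw [← hR, R.norm_map, R.norm_map, real_inner_comm] at h
  linarith

theorem linearIndependent_rotation (hR : ∀ x, R (R x) = R x - x) {x : V} (hx : x ≠ 0) :
    LinearIndependent ℝ ![x, R x] := by
  rw [LinearIndependent.pair_iff' hx]
  intro a ha
  have hx' : 0 < ‖x‖ := norm_pos_iff.mpr hx
  have hinner : a * ‖x‖ ^ 2 = ‖x‖ ^ 2 / 2 := by
    rw [← inner_self_rotation hR x, ← ha, real_inner_smul_right, real_inner_self_eq_norm_sq]
  have hnorm : |a| * ‖x‖ = ‖x‖ := by rw [← Real.norm_eq_abs, ← norm_smul, ha, R.norm_map]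
  have ha' : a = 1 / 2 :=
    mul_right_cancel₀ (pow_pos hx' 2).ne' (by linarith : a * ‖x‖ ^ 2 = 1 / 2 * ‖x‖ ^ 2)
  rw [ha', abs_of_pos (by norm_num)] at hnorm
  linarith

theorem span_pair_rotation_eq_top (hV : finrank ℝ V = 2) (hR : ∀ x, R (R x) = R x - x) {x : V}
    (hx : x ≠ 0) : span ℝ {x, R x} = ⊤ := by
  have h := (linearIndependent_rotation hR hx).span_eq_top_of_card_eq_finrank (by simp [hV])
  rwa [Matrix.range_cons, Matrix.range_cons, Matrix.range_empty, Set.union_empty,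
    Set.union_singleton, Set.pair_comm] at h

theorem abs_inner_eq_half_iff (hV : finrank ℝ V = 2) (hR : ∀ x, R (R x) = R x - x) {u v : V}
    (hu : u ≠ 0) : |⟪u, v⟫| = ‖u‖ * ‖v‖ / 2 ↔ v ∈ ℝ ∙ R u ∨ v ∈ ℝ ∙ R (R u) := by
  have hRR : ⟪u, R (R u)⟫ = -(‖u‖ ^ 2 / 2) := by
    rw [hR, inner_sub_right, inner_self_rotation hR, real_inner_self_eq_norm_sq]; ring
  constructor
  · intro h
    -- Writing `v = a • u + b • R u`, the squared condition becomes `a * (a + b) = 0`.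
    obtain ⟨a, b, rfl⟩ := mem_span_pair.mp (span_pair_rotation_eq_top hV hR hu ▸ mem_top : v ∈ _)
    have hi : ⟪u, a • u + b • R u⟫ = (a + b / 2) * ‖u‖ ^ 2 := by
      rw [inner_add_right, real_inner_smul_right, real_inner_smul_right, inner_self_rotation hR,
        real_inner_self_eq_norm_sq]; ring
    have hn : ‖a • u + b • R u‖ ^ 2 = (a ^ 2 + a * b + b ^ 2) * ‖u‖ ^ 2 := by
      rw [norm_add_sq_real, real_inner_smul_left, real_inner_smul_right, inner_self_rotation hR,
        norm_smul, norm_smul, R.norm_map, mul_pow, mul_pow, Real.norm_eq_abs, Real.norm_eq_abs,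
        sq_abs, sq_abs]; ring
    have hsq := congrArg (· ^ 2) h
    simp only [sq_abs, div_pow, mul_pow, hi, hn] at hsq
    have hu' : (0 : ℝ) < 3 / 4 * (‖u‖ ^ 2) ^ 2 := by positivity
    rcases mul_eq_zero.mp (by linear_combination hsq : 3 / 4 * (‖u‖ ^ 2) ^ 2 * (a * (a + b)) = 0)
      with h0 | h0
    · exact absurd h0 hu'.ne'
    rcases mul_eq_zero.mp h0 with rfl | hab
    · exact Or.inl (mem_span_singleton.mpr ⟨b, by simp⟩)
    · refine Or.inr (mem_span_singleton.mpr ⟨b, ?_⟩)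
      rw [hR, show a = -b by linarith]
      module
  · rintro (h | h) <;> obtain ⟨c, rfl⟩ := mem_span_singleton.mp h
    · rw [real_inner_smul_right, inner_self_rotation hR, norm_smul, R.norm_map, abs_mul,
        Real.norm_eq_abs, abs_of_nonneg (by positivity : (0 : ℝ) ≤ ‖u‖ ^ 2 / 2)]
      ring
    · rw [real_inner_smul_right, hRR, norm_smul, R.norm_map, R.norm_map, abs_mul, abs_neg,
        Real.norm_eq_abs, abs_of_nonneg (by positivity : (0 : ℝ) ≤ ‖u‖ ^ 2 / 2)]
      ring

theorem eq_rotation_or_of_norm_eq (hV : finrank ℝ V = 2) (hR : ∀ x, R (R x) = R x - x)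
    {d e : V} (he : ‖e‖ = ‖d‖) (hed : ‖e - d‖ = ‖d‖) : e = R d ∨ d = R e := by
  rcases eq_or_ne d 0 with rfl | hd
  · left
    simpa using he
  have hi : ⟪d, e⟫ = ‖d‖ ^ 2 / 2 := by
    have h := norm_sub_sq_real e d
    rw [hed, he, real_inner_comm] at h
    linarith
  have hd' := pow_pos (norm_pos_iff.mpr hd) 2
  have habs : |⟪d, e⟫| = ‖d‖ * ‖e‖ / 2 := by
    rw [hi, he, abs_of_nonneg (by positivity)]; ring
  rcases (abs_inner_eq_half_iff hV hR hd).mp habs with h | h <;>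
    obtain ⟨c, rfl⟩ := mem_span_singleton.mp h
  · rw [real_inner_smul_right, inner_self_rotation hR] at hi
    left
    rw [show c = 1 by nlinarith, one_smul]
  · rw [real_inner_smul_right, hR, inner_sub_right, inner_self_rotation hR,
      real_inner_self_eq_norm_sq] at hi
    right
    rw [show c = -1 by nlinarith, map_smul, hR (R d), hR d]
    module

theorem dist_eq_one_iff_rotation (hV : finrank ℝ V = 2) (hR : ∀ x, R (R x) = R x - x)
    {a b c : V} : (dist a b = 1 ∧ dist b c = 1 ∧ dist c a = 1) ↔
      (‖b - a‖ = 1 ∧ c - a = R (b - a)) ∨ (‖c - a‖ = 1 ∧ b - a = R (c - a)) := by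
  have oriented : ∀ {b c : V}, ‖b - a‖ = 1 → c - a = R (b - a) →
      dist a b = 1 ∧ dist b c = 1 ∧ dist c a = 1 := by
    intro b c hb hc
    have hbc : b - c = -R (R (b - a)) := by rw [hR, ← hc]; abel
    simp only [dist_eq_norm, norm_sub_rev a, hb, hbc, hc, norm_neg, R.norm_map, and_self]
  constructor
  · rintro ⟨hab, hbc, hca⟩
    rw [dist_eq_norm, norm_sub_rev] at hab hbc
    rw [dist_eq_norm] at hca
    have h := eq_rotation_or_of_norm_eq hV hR (d := b - a) (e := c - a) (by rw [hab, hca])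
      (by rw [sub_sub_sub_cancel_right, hbc, hab])
    exact h.imp (fun h => ⟨hab, h⟩) fun h => ⟨hca, h⟩
  · rintro (⟨hb, hc⟩ | ⟨hc, hb⟩)
    · exact oriented hb hc
    · obtain ⟨hac, hcb, hba⟩ := oriented hc hb
      exact ⟨by rwa [dist_comm], by rwa [dist_comm], by rwa [dist_comm]⟩

theorem eq_span_rotation_of_forall_exists (hR : ∀ x, R (R x) = R x - x)
    {u : V} (hu : u ≠ 0) {D₂ D₃ : Submodule ℝ V} (h₂ : finrank ℝ D₂ = 1)
    (h₃ : finrank ℝ D₃ = 1) (h : ∀ d, ∃ x ∈ ℝ ∙ u, x + d ∈ D₂ ∧ x + R d ∈ D₃) :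
    D₂ = ℝ ∙ R u ∧ D₃ = ℝ ∙ R (R u) := by
  -- Test the hypothesis on `d = R u`, `d = -u` and a generator `y` of `D₂`.
  have hRu : R u ≠ 0 := (map_ne_zero_iff R R.injective).mpr hu
  have hRRu : R (R u) ≠ 0 := (map_ne_zero_iff R R.injective).mpr hRu
  have hu₂ : u ∉ D₂ := by
    intro hu₂
    obtain ⟨x, hx, hx₂, -⟩ := h (R u)
    obtain ⟨s, rfl⟩ := mem_span_singleton.mp hx
    have hRu₂ : R u ∈ D₂ := by simpa using D₂.sub_mem hx₂ (D₂.smul_mem s hu₂)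
    rw [eq_span_singleton_of_mem_of_finrank_eq_one h₂ hu₂ hu] at hRu₂
    obtain ⟨a, ha⟩ := mem_span_singleton.mp hRu₂
    exact (LinearIndependent.pair_iff' hu).mp (linearIndependent_rotation hR hu) a ha
  have hs : ∀ s : ℝ, s • u ∈ D₂ → s = 0 := fun s hs => by
    by_contra hs0
    exact hu₂ (by simpa [hs0] using D₂.smul_mem s⁻¹ hs)
  have hD₃ : D₃ = ℝ ∙ R (R u) := by
    obtain ⟨x, hx, hx₂, hx₃⟩ := h (-u)
    obtain ⟨s, rfl⟩ := mem_span_singleton.mp hx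
    obtain rfl : s = 1 := sub_eq_zero.mp (hs _ (by rwa [sub_smul, one_smul, sub_eq_add_neg]))
    rw [one_smul, map_neg, ← sub_eq_add_neg, ← neg_sub, ← hR] at hx₃
    exact eq_span_singleton_of_mem_of_finrank_eq_one h₃ (by simpa using hx₃) hRRu
  refine ⟨?_, hD₃⟩
  obtain ⟨y, hy0, hD₂⟩ := exists_eq_span_singleton_of_finrank_eq_one h₂
  have hy : y ∈ D₂ := hD₂ ▸ mem_span_singleton_self y
  obtain ⟨x, hx, hx₂, hx₃⟩ := h y
  obtain ⟨s, rfl⟩ := mem_span_singleton.mp hx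
  obtain rfl : s = 0 := hs s (by simpa using D₂.sub_mem hx₂ hy)
  rw [zero_smul, zero_add, hD₃] at hx₃
  obtain ⟨c, hc⟩ := mem_span_singleton.mp hx₃
  rw [← map_smul] at hc
  have hy' : y = c • R u := (R.injective hc).symm
  have hc0 : c ≠ 0 := by rintro rfl; simp [hy'] at hy0
  refine eq_span_singleton_of_mem_of_finrank_eq_one h₂ ?_ hRu
  simpa [hy', hc0] using D₂.smul_mem c⁻¹ hy

theorem exists_add_mem_span_rotation (hV : finrank ℝ V = 2) (hR : ∀ x, R (R x) = R x - x)
    {u : V} (hu : u ≠ 0) (d : V) : ∃ x ∈ ℝ ∙ u, x + d ∈ ℝ ∙ R u ∧ x + R d ∈ ℝ ∙ R (R u) := by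
  obtain ⟨a, b, rfl⟩ := mem_span_pair.mp (span_pair_rotation_eq_top hV hR hu ▸ mem_top : d ∈ _)
  refine ⟨-a • u, smul_mem _ _ (mem_span_singleton_self u), mem_span_singleton.mpr ⟨b, by module⟩,
    mem_span_singleton.mpr ⟨a + b, ?_⟩⟩
  rw [map_add, map_smul, map_smul, hR]
  module

end Rotation

section Triangles

/-- The first sides `d = b - a` of the triangles `(a, b, a + R d)`, of any size, with vertices on
`L₁, L₂, L₃`. -/
def sideSpace (R : V →ₗ[ℝ] V) (L₁ L₂ L₃ : AffineSubspace ℝ V) : AffineSubspace ℝ V :=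
  (L₁.comap (LinearMap.fst ℝ V V).toAffineMap ⊓
      L₂.comap (LinearMap.fst ℝ V V + LinearMap.snd ℝ V V).toAffineMap ⊓
      L₃.comap (LinearMap.fst ℝ V V + R ∘ₗ LinearMap.snd ℝ V V).toAffineMap).map
    (LinearMap.snd ℝ V V).toAffineMap

def orientedUnitTriangles (R : V →ₗ[ℝ] V) (L₁ L₂ L₃ : AffineSubspace ℝ V) : Set (V × V × V) :=
  {t | t.1 ∈ L₁ ∧ t.2.1 ∈ L₂ ∧ t.2.2 ∈ L₃ ∧ ‖t.2.1 - t.1‖ = 1 ∧ t.2.2 - t.1 = R (t.2.1 - t.1)}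

variable {R : V →ₗ[ℝ] V} {L₁ L₂ L₃ : AffineSubspace ℝ V}

theorem mem_sideSpace {d : V} :
    d ∈ sideSpace R L₁ L₂ L₃ ↔ ∃ a ∈ L₁, a + d ∈ L₂ ∧ a + R d ∈ L₃ := by
  simp [sideSpace, AffineSubspace.mem_map, AffineSubspace.mem_comap, AffineSubspace.mem_inf_iff,
    and_assoc]

theorem mem_sideSpace_iff_of_mem {a₀ d : V} (h₁ : a₀ ∈ L₁) (h₂ : a₀ ∈ L₂) (h₃ : a₀ ∈ L₃) :
    d ∈ sideSpace R L₁ L₂ L₃ ↔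
      ∃ x ∈ L₁.direction, x + d ∈ L₂.direction ∧ x + R d ∈ L₃.direction := by
  rw [mem_sideSpace]
  constructor
  · rintro ⟨a, ha, hb, hc⟩
    refine ⟨a - a₀, AffineSubspace.vsub_mem_direction ha h₁, ?_, ?_⟩
    · convert AffineSubspace.vsub_mem_direction hb h₂ using 1
      rw [vsub_eq_sub]; abel
    · convert AffineSubspace.vsub_mem_direction hc h₃ using 1
      rw [vsub_eq_sub]; abel
  · rintro ⟨x, hx, hb, hc⟩
    refine ⟨x + a₀, (AffineSubspace.vadd_mem_iff_mem_direction x h₁).mpr hx, ?_, ?_⟩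
    · convert (AffineSubspace.vadd_mem_iff_mem_direction _ h₂).mpr hb using 1
      rw [vadd_eq_add]; abel
    · convert (AffineSubspace.vadd_mem_iff_mem_direction _ h₃).mpr hc using 1
      rw [vadd_eq_add]; abel

theorem injOn_sub_orientedUnitTriangles (h₁ : finrank ℝ L₁.direction = 1)
    (h₂ : finrank ℝ L₂.direction = 1) (h₃ : finrank ℝ L₃.direction = 1)
    (hnp : ¬(L₁.direction = L₂.direction ∧ L₁.direction = L₃.direction)) :
    Set.InjOn (fun t : V × V × V => t.2.1 - t.1) (orientedUnitTriangles R L₁ L₂ L₃) := by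
  rintro ⟨a, b, c⟩ ⟨ha, hb, hc, -, hcR⟩ ⟨a', b', c'⟩ ⟨ha', hb', hc', -, hcR'⟩ hd
  dsimp only at hd hcR hcR' ha hb hc ha' hb' hc'
  have hbb' : b - b' = a - a' := sub_eq_sub_iff_sub_eq_sub.mp hd
  have hcc' : c - c' = a - a' := by
    rw [← hd] at hcR'
    exact sub_eq_sub_iff_sub_eq_sub.mp (hcR.trans hcR'.symm)
  have hx₁ : a - a' ∈ L₁.direction := AffineSubspace.vsub_mem_direction ha ha'
  have hx₂ : a - a' ∈ L₂.direction := hbb' ▸ AffineSubspace.vsub_mem_direction hb hb'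
  have hx₃ : a - a' ∈ L₃.direction := hcc' ▸ AffineSubspace.vsub_mem_direction hc hc'
  have haa' : a = a' := by
    by_contra hne
    have hne := sub_ne_zero.mpr hne
    exact hnp ⟨(eq_span_singleton_of_mem_of_finrank_eq_one h₁ hx₁ hne).trans
        (eq_span_singleton_of_mem_of_finrank_eq_one h₂ hx₂ hne).symm,
      (eq_span_singleton_of_mem_of_finrank_eq_one h₁ hx₁ hne).trans
        (eq_span_singleton_of_mem_of_finrank_eq_one h₃ hx₃ hne).symm⟩
  subst haa'
  rw [sub_left_inj] at hd
  rw [sub_self, sub_eq_zero] at hcc'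
  rw [hd, hcc']

theorem image_sub_orientedUnitTriangles :
    (fun t : V × V × V => t.2.1 - t.1) '' orientedUnitTriangles R L₁ L₂ L₃ =
      (sideSpace R L₁ L₂ L₃ : Set V) ∩ sphere 0 1 := by
  ext d
  constructor
  · rintro ⟨⟨a, b, c⟩, ⟨ha, hb, hc, hd, hcR⟩, rfl⟩
    refine ⟨mem_sideSpace.mpr ⟨a, ha, by simpa using hb, ?_⟩, by simpa using hd⟩
    rw [← hcR, add_sub_cancel]
    exact hc
  · rintro ⟨hW, hd⟩
    obtain ⟨a, ha, hb, hc⟩ := mem_sideSpace.mp hW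
    exact ⟨(a, a + d, a + R d), ⟨ha, hb, hc, by simpa using hd, by simp⟩, by simp⟩

theorem orientedUnitTriangles_infinite_iff (hV : finrank ℝ V = 2)
    (h₁ : finrank ℝ L₁.direction = 1) (h₂ : finrank ℝ L₂.direction = 1)
    (h₃ : finrank ℝ L₃.direction = 1)
    (hnp : ¬(L₁.direction = L₂.direction ∧ L₁.direction = L₃.direction)) :
    (orientedUnitTriangles R L₁ L₂ L₃).Infinite ↔ sideSpace R L₁ L₂ L₃ = ⊤ := by
  constructor
  · intro h
    refine AffineSubspace.eq_top_of_infinite_inter_sphere hV (c := 0) (r := 1) ?_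
    rw [← image_sub_orientedUnitTriangles]
    exact h.image (injOn_sub_orientedUnitTriangles h₁ h₂ h₃ hnp)
  · intro h
    have : FiniteDimensional ℝ V := Module.finite_of_finrank_eq_succ hV
    refine Set.Infinite.of_image (fun t : V × V × V => t.2.1 - t.1) ?_
    rw [image_sub_orientedUnitTriangles, h, AffineSubspace.top_coe, Set.univ_inter]
    exact sphere_infinite (by rw [← finrank_eq_rank, hV]; norm_num) 0 one_pos

end Triangles

variable {R : V →ₗᵢ[ℝ] V}

theorem sideSpace_eq_top_iff (hV : finrank ℝ V = 2) (hR : ∀ x, R (R x) = R x - x) {u : V}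
    (hu : u ≠ 0) {L₁ L₂ L₃ : AffineSubspace ℝ V} (h₁ : L₁.direction = ℝ ∙ u)
    (h₂ : finrank ℝ L₂.direction = 1) (h₃ : finrank ℝ L₃.direction = 1) :
    sideSpace R.toLinearMap L₁ L₂ L₃ = ⊤ ↔ (∃ x, x ∈ L₁ ∧ x ∈ L₂ ∧ x ∈ L₃) ∧
      L₂.direction = ℝ ∙ R u ∧ L₃.direction = ℝ ∙ R (R u) := by
  constructor
  · intro h
    obtain ⟨a₀, ha₁, ha₂, ha₃⟩ := mem_sideSpace.mp (h ▸ AffineSubspace.mem_top ℝ V 0)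
    rw [add_zero] at ha₂
    rw [map_zero, add_zero] at ha₃
    refine ⟨⟨a₀, ha₁, ha₂, ha₃⟩, eq_span_rotation_of_forall_exists hR hu h₂ h₃ fun d => ?_⟩
    rw [← h₁]
    exact (mem_sideSpace_iff_of_mem ha₁ ha₂ ha₃).mp (h ▸ AffineSubspace.mem_top ℝ V d)
  · rintro ⟨⟨a₀, ha₁, ha₂, ha₃⟩, hd₂, hd₃⟩
    refine eq_top_iff.mpr fun d _ => (mem_sideSpace_iff_of_mem ha₁ ha₂ ha₃).mpr ?_
    rw [h₁, hd₂, hd₃]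
    exact exists_add_mem_span_rotation hV hR hu d

theorem finite_unitTriangles_iff (hV : finrank ℝ V = 2) (hR : ∀ x, R (R x) = R x - x)
    {L₁ L₂ L₃ : AffineSubspace ℝ V} :
    {t : V × V × V | t.1 ∈ L₁ ∧ t.2.1 ∈ L₂ ∧ t.2.2 ∈ L₃ ∧
        dist t.1 t.2.1 = 1 ∧ dist t.2.1 t.2.2 = 1 ∧ dist t.2.2 t.1 = 1}.Finite ↔
      (orientedUnitTriangles R.toLinearMap L₁ L₂ L₃).Finite ∧
        (orientedUnitTriangles R.toLinearMap L₁ L₃ L₂).Finite := by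
  let swap : V × V × V → V × V × V := fun t => (t.1, t.2.2, t.2.1)
  have hsplit : {t : V × V × V | t.1 ∈ L₁ ∧ t.2.1 ∈ L₂ ∧ t.2.2 ∈ L₃ ∧
      dist t.1 t.2.1 = 1 ∧ dist t.2.1 t.2.2 = 1 ∧ dist t.2.2 t.1 = 1} =
      orientedUnitTriangles R.toLinearMap L₁ L₂ L₃ ∪
        swap '' orientedUnitTriangles R.toLinearMap L₁ L₃ L₂ := by
    ext ⟨a, b, c⟩
    simp [dist_eq_one_iff_rotation hV hR, orientedUnitTriangles, swap]
    tauto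
  have hswap : Function.Injective swap := Function.Involutive.injective fun _ => rfl
  rw [hsplit, Set.finite_union, Set.finite_image_iff hswap.injOn]

end EuclideanPlane

section AngleSixty

local notation "E²" => EuclideanSpace ℝ (Fin 2)

variable {q₁ q₂ q₃ : AffineSubspace ℝ E²}

theorem AngleSixty.symm (h : AngleSixty q₁ q₂) : AngleSixty q₂ q₁ := by
  intro u hu v hv hu0 hv0
  rw [real_inner_comm, mul_comm]
  exact h v hv u hu hv0 hu0

theorem AngleSixty.direction_ne (h : AngleSixty q₁ q₂) {v : E²} (hv : v ∈ q₁.direction)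
    (hv0 : v ≠ 0) : q₁.direction ≠ q₂.direction := by
  intro heq
  have h' := h v hv v (heq ▸ hv) hv0 hv0
  rw [real_inner_self_eq_norm_sq, abs_of_nonneg (by positivity)] at h'
  have := norm_pos_iff.mpr hv0
  nlinarith

theorem angleSixty_iff {u v : E²} (h₁ : q₁.direction = ℝ ∙ u) (h₂ : q₂.direction = ℝ ∙ v) :
    AngleSixty q₁ q₂ ↔ |⟪u, v⟫| = ‖u‖ * ‖v‖ / 2 := by
  constructor
  · intro h
    rcases eq_or_ne u 0 with rfl | hu
    · simp
    rcases eq_or_ne v 0 with rfl | hv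
    · simp
    exact h u (h₁ ▸ mem_span_singleton_self u) v (h₂ ▸ mem_span_singleton_self v) hu hv
  · intro h x hx y hy _ _
    rw [h₁, mem_span_singleton] at hx
    rw [h₂, mem_span_singleton] at hy
    obtain ⟨a, rfl⟩ := hx
    obtain ⟨b, rfl⟩ := hy
    rw [real_inner_smul_left, real_inner_smul_right, norm_smul, norm_smul, abs_mul, abs_mul, h,
      Real.norm_eq_abs, Real.norm_eq_abs]
    ring

theorem angleSixty_iff_direction_eq {R : E² →ₗᵢ[ℝ] E²} (hR : ∀ x, R (R x) = R x - x) {u : E²}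
    (hu : u ≠ 0) (h₁ : q₁.direction = ℝ ∙ u) (h₂ : finrank ℝ q₂.direction = 1) :
    AngleSixty q₁ q₂ ↔ q₂.direction = ℝ ∙ R u ∨ q₂.direction = ℝ ∙ R (R u) := by
  obtain ⟨v, hv0, h₂'⟩ := exists_eq_span_singleton_of_finrank_eq_one h₂
  have hv : v ∈ q₂.direction := h₂' ▸ mem_span_singleton_self v
  have hspan : ∀ w : E², w ≠ 0 → (v ∈ ℝ ∙ w ↔ q₂.direction = ℝ ∙ w) := fun w hw =>
    ⟨fun h => h₂'.trans (eq_span_singleton_of_mem_of_finrank_eq_one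
      (finrank_span_singleton hw) h hv0).symm, fun h => h ▸ hv⟩
  have hRu : R u ≠ 0 := (map_ne_zero_iff R R.injective).mpr hu
  rw [angleSixty_iff h₁ h₂', abs_inner_eq_half_iff finrank_euclideanSpace_fin hR hu, hspan _ hRu,
    hspan _ ((map_ne_zero_iff R R.injective).mpr hRu)]

theorem angleSixty_three_iff {R : E² →ₗᵢ[ℝ] E²} (hR : ∀ x, R (R x) = R x - x) {u : E²}
    (hu : u ≠ 0) (h₁ : q₁.direction = ℝ ∙ u) (h₂ : finrank ℝ q₂.direction = 1)
    (h₃ : finrank ℝ q₃.direction = 1) :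
    AngleSixty q₁ q₂ ∧ AngleSixty q₁ q₃ ∧ AngleSixty q₂ q₃ ↔
      (q₂.direction = ℝ ∙ R u ∧ q₃.direction = ℝ ∙ R (R u)) ∨
        (q₃.direction = ℝ ∙ R u ∧ q₂.direction = ℝ ∙ R (R u)) := by
  have hRu : R u ≠ 0 := (map_ne_zero_iff R R.injective).mpr hu
  rw [angleSixty_iff_direction_eq hR hu h₁ h₂, angleSixty_iff_direction_eq hR hu h₁ h₃]
  constructor
  · rintro ⟨h12, h13, h23⟩
    obtain ⟨v, hv0, hv⟩ := exists_eq_span_singleton_of_finrank_eq_one h₂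
    have hne := h23.direction_ne (hv ▸ mem_span_singleton_self v) hv0
    rcases h12 with h12 | h12 <;> rcases h13 with h13 | h13
    · exact absurd (h12.trans h13.symm) hne
    · exact Or.inl ⟨h12, h13⟩
    · exact Or.inr ⟨h13, h12⟩
    · exact absurd (h12.trans h13.symm) hne
  · rintro (⟨h12, h13⟩ | ⟨h13, h12⟩)
    · exact ⟨Or.inl h12, Or.inr h13, (angleSixty_iff_direction_eq hR hRu h12 h₃).mpr (Or.inl h13)⟩
    · exact ⟨Or.inr h12, Or.inl h13,
        ((angleSixty_iff_direction_eq hR hRu h13 h₂).mpr (Or.inl h12)).symm⟩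

end AngleSixty

theorem stmt7 (q₁ q₂ q₃ : AffineSubspace ℝ (EuclideanSpace ℝ (Fin 2)))
    (h₁ : IsLine q₁) (h₂ : IsLine q₂) (h₃ : IsLine q₃)
    (hnp : ¬(q₁.direction = q₂.direction ∧ q₁.direction = q₃.direction)) :
    Xor'
      ((∃ x : EuclideanSpace ℝ (Fin 2), x ∈ q₁ ∧ x ∈ q₂ ∧ x ∈ q₃) ∧
        AngleSixty q₁ q₂ ∧ AngleSixty q₁ q₃ ∧ AngleSixty q₂ q₃)
      ({t : EuclideanSpace ℝ (Fin 2) × EuclideanSpace ℝ (Fin 2) × EuclideanSpace ℝ (Fin 2) |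
          t.1 ∈ q₁ ∧ t.2.1 ∈ q₂ ∧ t.2.2 ∈ q₃ ∧
          dist t.1 t.2.1 = 1 ∧ dist t.2.1 t.2.2 = 1 ∧ dist t.2.2 t.1 = 1}.Finite) := by
  have hV : finrank ℝ (EuclideanSpace ℝ (Fin 2)) = 2 := finrank_euclideanSpace_fin
  obtain ⟨R, hR⟩ := exists_rotation_sixty hV
  obtain ⟨u, hu, hd₁⟩ := exists_eq_span_singleton_of_finrank_eq_one h₁.2
  have hswap : (∃ x, x ∈ q₁ ∧ x ∈ q₃ ∧ x ∈ q₂) ↔ ∃ x, x ∈ q₁ ∧ x ∈ q₂ ∧ x ∈ q₃ :=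
    exists_congr fun x => and_congr_right' and_comm
  rw [Xor', xor_iff_iff_not, angleSixty_three_iff hR hu hd₁ h₂.2 h₃.2,
    finite_unitTriangles_iff hV hR, ← Set.not_infinite, ← Set.not_infinite,
    orientedUnitTriangles_infinite_iff hV h₁.2 h₂.2 h₃.2 hnp,
    orientedUnitTriangles_infinite_iff hV h₁.2 h₃.2 h₂.2 (fun h => hnp h.symm),
    sideSpace_eq_top_iff hV hR hu hd₁ h₂.2 h₃.2, sideSpace_eq_top_iff hV hR hu hd₁ h₃.2 h₂.2, hswap,
    not_and_or, not_not, not_not, and_or_left]
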